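/- For every p₁, p₂ ∈ ℓ² and all s₁, s₂ ∈ ℝ, the sub-Riemannian geodesic distance on the infinite-dimensional Heisenberg group vanishes between the points (p₁,p₂,s₁) and (p₁,p₂,s₂): ρ((p₁,p₂,s₁),(p₁,p₂,s₂)) = 0. In particular, ρ is not positive on all pairs of distinct points of 𝓗. -/

import Mathlib

open scoped RealInnerProductSpace
open Real

noncomputable section

abbrev l2 : Type := lp (fun _ : ℕ => ℝ) 2

abbrev Hei : Type := l2 × l2 × ℝ

/-- The group operation of the infinite dimensional Heisenberg group. -/
def hMul (p q : Hei) : Hei :=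
  (p.1 + q.1, p.2.1 + q.2.1, p.2.2 + q.2.2 + ⟪p.1, q.2.1⟫ - ⟪p.2.1, q.1⟫)

/-- The square of the weak norm `‖u‖_η`. -/
def etaSq (u : l2) : ℝ := ∑' k : ℕ, (u k)^2 / ((k : ℝ) + 1)

/-- The square of the weak Riemannian norm `‖v‖_{σ,p}`. -/
def sigmaSq (p v : Hei) : ℝ :=
  etaSq v.1 + etaSq v.2.1 + (v.2.2 - ⟪p.1, v.2.1⟫ + ⟪p.2.1, v.1⟫)^2

def PiecewiseC1 (γ : ℝ → Hei) : Prop :=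
  ContinuousOn γ (Set.Icc 0 1) ∧
  ∃ S : Finset ℝ, ∀ t ∈ Set.Icc (0:ℝ) 1, t ∉ S →
    DifferentiableAt ℝ γ t ∧ ContinuousAt (deriv γ) t

def Horizontal (γ : ℝ → Hei) : Prop :=
  ∀ t ∈ Set.Icc (0:ℝ) 1, DifferentiableAt ℝ γ t →
    deriv (fun s => (γ s).2.2) t
      = ⟪(γ t).1, deriv (fun s => (γ s).2.1) t⟫
        - ⟪(γ t).2.1, deriv (fun s => (γ s).1) t⟫

def lenSigma (γ : ℝ → Hei) : ℝ :=
  ∫ t in (0:ℝ)..1, Real.sqrt (sigmaSq (γ t) (deriv γ t))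

def lenG (γ : ℝ → Hei) : ℝ :=
  ∫ t in (0:ℝ)..1,
    Real.sqrt (etaSq (deriv (fun s => (γ s).1) t) + etaSq (deriv (fun s => (γ s).2.1) t))

def dSigma (p q : Hei) : ℝ :=
  sInf {L | ∃ γ : ℝ → Hei, PiecewiseC1 γ ∧ γ 0 = p ∧ γ 1 = q ∧ lenSigma γ = L}

def rho (p q : Hei) : ℝ :=
  sInf {L | ∃ γ : ℝ → Hei, PiecewiseC1 γ ∧ Horizontal γ ∧ γ 0 = p ∧ γ 1 = q ∧ lenG γ = L}

def sigma0 (v w : Hei) : ℝ :=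
  (∑' k : ℕ, ((v.1 k) * (w.1 k) + (v.2.1 k) * (w.2.1 k)) / ((k : ℝ) + 1)) + v.2.2 * w.2.2

def bracket (X Y : Hei) : Hei := (0, 0, 2 * (⟪X.1, Y.2.1⟫ - ⟪X.2.1, Y.1⟫))

/-- `eVec n` is the `(n+1)`-th standard basis vector of `ℓ²`. -/
def eVec (n : ℕ) : l2 := lp.single 2 n 1

def e3 : Hei := (0, 0, 1)

/-
Every loop in the horizontal coordinates lifts to a horizontal curve, whose vertical coordinate
changes by twice the signed area the loop encloses. An ellipse in the plane spanned by
`(e_n, 0)` and `(0, e_n)` thus produces any prescribed vertical displacement, while the weak norm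
`‖e_n‖_η = (n + 1)^{-1/2}` makes the g-length of the loop decay like `(n + 1)^{-1/2}`; hence the
infimum defining `ρ` is `0`.
-/

open Filter Topology

lemma inner_smul_eVec (u : l2) (a : ℝ) (n : ℕ) : ⟪u, a • eVec n⟫ = a * u n := by
  rw [real_inner_smul_right, eVec, lp.inner_single_right]
  simp

lemma add_smul_eVec_apply_self (u : l2) (a : ℝ) (n : ℕ) : (u + a • eVec n) n = u n + a := by
  change u n + a * eVec n n = _
  simp [eVec]

lemma etaSq_smul_eVec (a : ℝ) (n : ℕ) : etaSq (a • eVec n) = a ^ 2 / ((n : ℝ) + 1) := by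
  rw [etaSq, tsum_eq_single n]
  · simp [eVec]
  · intro k hk
    simp [eVec, hk]

lemma lenG_nonneg (γ : ℝ → Hei) : 0 ≤ lenG γ :=
  intervalIntegral.integral_nonneg zero_le_one fun _ _ => Real.sqrt_nonneg _

lemma rho_nonneg (p q : Hei) : 0 ≤ rho p q :=
  Real.sInf_nonneg <| by
    rintro _ ⟨γ, -, -, -, -, rfl⟩
    exact lenG_nonneg γ

lemma rho_le_lenG {p q : Hei} {γ : ℝ → Hei} (hγ : PiecewiseC1 γ) (hhor : Horizontal γ)
    (h0 : γ 0 = p) (h1 : γ 1 = q) : rho p q ≤ lenG γ :=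
  csInf_le ⟨0, by rintro _ ⟨γ, -, -, -, -, rfl⟩; exact lenG_nonneg γ⟩ ⟨γ, hγ, hhor, h0, h1, rfl⟩

def planarLift (n : ℕ) (p₁ p₂ : l2) (x y z : ℝ → ℝ) : ℝ → Hei :=
  fun t => (p₁ + x t • eVec n, p₂ + y t • eVec n, z t)

section planarLift

variable {n : ℕ} {p₁ p₂ : l2} {x y z x' y' z' : ℝ → ℝ}

lemma hasDerivAt_planarLift (hx : ∀ t, HasDerivAt x (x' t) t) (hy : ∀ t, HasDerivAt y (y' t) t)
    (hz : ∀ t, HasDerivAt z (z' t) t) (t : ℝ) :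
    HasDerivAt (planarLift n p₁ p₂ x y z) (x' t • eVec n, y' t • eVec n, z' t) t :=
  (((hx t).smul_const _).const_add p₁).prodMk ((((hy t).smul_const _).const_add p₂).prodMk (hz t))

lemma piecewiseC1_planarLift (hx : ∀ t, HasDerivAt x (x' t) t) (hy : ∀ t, HasDerivAt y (y' t) t)
    (hz : ∀ t, HasDerivAt z (z' t) t) (hx' : Continuous x') (hy' : Continuous y')
    (hz' : Continuous z') : PiecewiseC1 (planarLift n p₁ p₂ x y z) := by
  have hderiv : deriv (planarLift n p₁ p₂ x y z) = fun t => (x' t • eVec n, y' t • eVec n, z' t) :=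
    funext fun t => (hasDerivAt_planarLift hx hy hz t).deriv
  refine ⟨(continuous_iff_continuousAt.2 fun t =>
    (hasDerivAt_planarLift hx hy hz t).continuousAt).continuousOn, ∅, fun t _ _ =>
    ⟨(hasDerivAt_planarLift hx hy hz t).differentiableAt, ?_⟩⟩
  rw [hderiv]
  fun_prop

lemma deriv_planarLift_fst (hx : ∀ t, HasDerivAt x (x' t) t) (t : ℝ) :
    deriv (fun s => (planarLift n p₁ p₂ x y z s).1) t = x' t • eVec n :=
  (((hx t).smul_const _).const_add p₁).deriv

lemma deriv_planarLift_snd_fst (hy : ∀ t, HasDerivAt y (y' t) t) (t : ℝ) :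
    deriv (fun s => (planarLift n p₁ p₂ x y z s).2.1) t = y' t • eVec n :=
  (((hy t).smul_const _).const_add p₂).deriv

lemma horizontal_planarLift (hx : ∀ t, HasDerivAt x (x' t) t) (hy : ∀ t, HasDerivAt y (y' t) t)
    (hz : ∀ t, HasDerivAt z (z' t) t)
    (hz' : ∀ t, z' t = (p₁ n + x t) * y' t - (p₂ n + y t) * x' t) :
    Horizontal (planarLift n p₁ p₂ x y z) := by
  intro t _ _
  rw [deriv_planarLift_fst hx, deriv_planarLift_snd_fst hy,
    show deriv (fun s => (planarLift n p₁ p₂ x y z s).2.2) t = z' t from (hz t).deriv]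
  simp only [planarLift, inner_smul_eVec, add_smul_eVec_apply_self, hz']
  ring

lemma lenG_planarLift (hx : ∀ t, HasDerivAt x (x' t) t) (hy : ∀ t, HasDerivAt y (y' t) t) :
    lenG (planarLift n p₁ p₂ x y z) =
      (∫ t in (0 : ℝ)..1, √(x' t ^ 2 + y' t ^ 2)) / √((n : ℝ) + 1) := by
  rw [lenG, ← intervalIntegral.integral_div]
  congr 1
  ext t
  rw [deriv_planarLift_fst hx, deriv_planarLift_snd_fst hy, etaSq_smul_eVec, etaSq_smul_eVec,
    ← add_div, Real.sqrt_div' _ (by positivity)]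

end planarLift

lemma hasDerivAt_sin_two_pi_mul (t : ℝ) :
    HasDerivAt (fun s => sin (2 * π * s)) (2 * π * cos (2 * π * t)) t := by
  simpa [mul_comm] using ((hasDerivAt_id t).const_mul (2 * π)).sin

lemma hasDerivAt_cos_two_pi_mul (t : ℝ) :
    HasDerivAt (fun s => cos (2 * π * s)) (-(2 * π * sin (2 * π * t))) t := by
  simpa [mul_comm] using ((hasDerivAt_id t).const_mul (2 * π)).cos

/-- A lift of the ellipse `(sin θ, c (1 - cos θ))`; its last coordinate is the primitive of
`(p₁ n + x) y' - (p₂ n + y) x'`, which makes it horizontal. -/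
def verticalLoop (n : ℕ) (p₁ p₂ : l2) (s c : ℝ) : ℝ → Hei :=
  planarLift n p₁ p₂ (fun t => sin (2 * π * t)) (fun t => c * (1 - cos (2 * π * t)))
    (fun t => s + c * p₁ n * (1 - cos (2 * π * t)) - p₂ n * sin (2 * π * t)
      + c * (2 * π * t - sin (2 * π * t)))

section verticalLoop

variable (n : ℕ) (p₁ p₂ : l2) (s c : ℝ)

lemma verticalLoop_zero : verticalLoop n p₁ p₂ s c 0 = (p₁, p₂, s) := by
  simp [verticalLoop, planarLift]

lemma verticalLoop_one : verticalLoop n p₁ p₂ s c 1 = (p₁, p₂, s + 2 * π * c) := by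
  simp only [verticalLoop, planarLift, mul_one, sin_two_pi, cos_two_pi]
  simp only [sub_self, mul_zero, zero_smul, add_zero, sub_zero, Prod.mk.injEq, true_and]
  ring

lemma hasDerivAt_verticalLoop_snd_fst (t : ℝ) :
    HasDerivAt (fun t => c * (1 - cos (2 * π * t))) (c * (2 * π * sin (2 * π * t))) t := by
  simpa using ((hasDerivAt_cos_two_pi_mul t).const_sub 1).const_mul c

lemma hasDerivAt_verticalLoop_snd_snd (t : ℝ) :
    HasDerivAt (fun t => s + c * p₁ n * (1 - cos (2 * π * t)) - p₂ n * sin (2 * π * t)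
      + c * (2 * π * t - sin (2 * π * t)))
      (c * p₁ n * (2 * π * sin (2 * π * t)) - p₂ n * (2 * π * cos (2 * π * t))
        + c * (2 * π - 2 * π * cos (2 * π * t))) t := by
  have hlin : HasDerivAt (fun t => 2 * π * t) (2 * π) t := by
    simpa using (hasDerivAt_id t).const_mul (2 * π)
  have := (((((hasDerivAt_cos_two_pi_mul t).const_sub 1).const_mul (c * p₁ n)).const_add s).sub
    ((hasDerivAt_sin_two_pi_mul t).const_mul (p₂ n))).add
    ((hlin.sub (hasDerivAt_sin_two_pi_mul t)).const_mul c)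
  rwa [neg_neg] at this

lemma piecewiseC1_verticalLoop : PiecewiseC1 (verticalLoop n p₁ p₂ s c) :=
  piecewiseC1_planarLift hasDerivAt_sin_two_pi_mul (hasDerivAt_verticalLoop_snd_fst c)
    (hasDerivAt_verticalLoop_snd_snd n p₁ p₂ s c) (by fun_prop) (by fun_prop) (by fun_prop)

lemma horizontal_verticalLoop : Horizontal (verticalLoop n p₁ p₂ s c) :=
  horizontal_planarLift hasDerivAt_sin_two_pi_mul (hasDerivAt_verticalLoop_snd_fst c)
    (hasDerivAt_verticalLoop_snd_snd n p₁ p₂ s c) fun t => by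
      linear_combination (-(2 * π * c)) * sin_sq_add_cos_sq (2 * π * t)

lemma lenG_verticalLoop : lenG (verticalLoop n p₁ p₂ s c) =
    (∫ t in (0 : ℝ)..1, √((2 * π * cos (2 * π * t)) ^ 2 + (c * (2 * π * sin (2 * π * t))) ^ 2))
      / √((n : ℝ) + 1) :=
  lenG_planarLift hasDerivAt_sin_two_pi_mul (hasDerivAt_verticalLoop_snd_fst c)

end verticalLoop

lemma rho_eq_zero_of_proj_eq (p₁ p₂ : l2) (s₁ s₂ : ℝ) : rho (p₁, p₂, s₁) (p₁, p₂, s₂) = 0 := by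
  set c := (s₂ - s₁) / (2 * π)
  have hend : s₁ + 2 * π * c = s₂ := by
    simp only [c]
    field_simp
    ring
  obtain ⟨L, hL⟩ : ∃ L, ∀ n : ℕ, lenG (verticalLoop n p₁ p₂ s₁ c) = L / √((n : ℝ) + 1) :=
    ⟨_, fun n => lenG_verticalLoop n p₁ p₂ s₁ c⟩
  have hle (n : ℕ) : rho (p₁, p₂, s₁) (p₁, p₂, s₂) ≤ L / √((n : ℝ) + 1) :=
    hL n ▸ rho_le_lenG (piecewiseC1_verticalLoop n p₁ p₂ s₁ c)
      (horizontal_verticalLoop n p₁ p₂ s₁ c) (verticalLoop_zero n p₁ p₂ s₁ c)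
      (hend ▸ verticalLoop_one n p₁ p₂ s₁ c)
  have hlim : Tendsto (fun n : ℕ => L / √((n : ℝ) + 1)) atTop (𝓝 0) :=
    tendsto_const_nhds.div_atTop
      (tendsto_sqrt_atTop.comp (tendsto_atTop_add_const_right _ 1 tendsto_natCast_atTop_atTop))
  exact le_antisymm (ge_of_tendsto' hlim hle) (rho_nonneg _ _)

/-- The sub-Riemannian geodesic distance `ρ` vanishes between points with the same
horizontal projection; in particular `ρ` is not positive on all pairs of distinct points. -/
theorem statement3 :
    (∀ (p₁ p₂ : l2) (s₁ s₂ : ℝ), rho (p₁, p₂, s₁) (p₁, p₂, s₂) = 0) ∧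
    ¬ (∀ p q : Hei, p ≠ q → 0 < rho p q) := by
  refine ⟨rho_eq_zero_of_proj_eq, fun h => ?_⟩
  have hne : ((0, 0, 0) : Hei) ≠ (0, 0, 1) := by simp
  exact (h _ _ hne).ne' (rho_eq_zero_of_proj_eq 0 0 0 1)

end
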